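/- Let H_n = Ω_n − ᵀΩ̄_n, where Ω_n is the n×n matrix with diagonal entries 1, subdiagonal entries all 1−t, and zeros above the diagonal, and the bar is the involution t ↦ t⁻¹. Then det H_n = (−1)^n [ (1−t)^{n−1} − (t⁻¹ − 1)^{n−1} ]. -/

import Mathlib

/-!
Write `a = 1 - t`, `b = t⁻¹ - 1`. Then `H_n` has `0` on the diagonal, `a` below it and `b`
above it. Adding a constant `y` to every entry of a matrix changes its determinant by an
affine function of `y`; at `y = -a` and `y = -b` the matrix becomes triangular, which gives
`(b - a) det H_n = b (-a)^n - a (-b)^n`. The relation `a b = b - a` turns the right-hand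
side into `(b - a) (-1)^n (a^(n-1) - b^(n-1))`, and `b - a` cancels unless `a = b = 0`.
-/

open Matrix

/-- The lower-triangular matrix `Ω_n` with `1`'s on the diagonal and all entries
below the diagonal equal to `1 - s`. -/
def omegaMat (K : Type*) [Field K] (s : K) (n : ℕ) : Matrix (Fin n) (Fin n) K :=
  Matrix.of fun j k => if j = k then 1 else if k < j then 1 - s else 0

namespace Matrix

variable {R : Type*} [CommRing R] {ι : Type*} [Fintype ι]

theorem exists_det_add_const_eq [DecidableEq ι] (A : Matrix ι ι R) :
    ∃ c : R, ∀ y : R, (A + of fun _ _ => y).det = A.det + y * c := by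
  cases isEmpty_or_nonempty ι
  · exact ⟨0, fun y => by simp [det_isEmpty]⟩
  obtain ⟨k⟩ := ‹Nonempty ι›
  let B : Matrix ι ι R := of fun i j => A i j - A k j
  -- subtracting row `k` from every other row confines `y` to row `k`
  have row_reduce : ∀ y, (A + of fun _ _ => y).det = (updateRow B k (A k + y • 1)).det :=
    fun y => det_eq_of_forall_row_eq_smul_add_const (fun i => if i = k then 0 else 1) k
      (by simp) fun i j => by
        rcases eq_or_ne i k with rfl | hi
        · simp [updateRow_apply]
        · simp [B, updateRow_apply, hi]
          ring
  have at_zero : A.det = (updateRow B k (A k)).det := by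
    simpa [show (of fun _ _ => (0 : R) : Matrix ι ι R) = 0 from rfl] using row_reduce 0
  refine ⟨(updateRow B k 1).det, fun y => ?_⟩
  rw [row_reduce, det_updateRow_add, det_updateRow_smul, at_zero]

def diagLowerUpper [LinearOrder ι] (x a b : R) : Matrix ι ι R :=
  of fun i j => if i = j then x else if j < i then a else b

theorem sub_mul_det_diagLowerUpper [LinearOrder ι] (x a b : R) :
    (b - a) * (diagLowerUpper x a b : Matrix ι ι R).det =
      b * (x - a) ^ Fintype.card ι - a * (x - b) ^ Fintype.card ι := by
  obtain ⟨c, hc⟩ := exists_det_add_const_eq (diagLowerUpper x a b : Matrix ι ι R)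
  have upper : (diagLowerUpper x a b + of fun _ _ => -a : Matrix ι ι R).det =
      (x - a) ^ Fintype.card ι := by
    rw [det_of_isUpperTriangular]
    · simp [diagLowerUpper, sub_eq_add_neg]
    · intro i j (hji : j < i)
      simp [diagLowerUpper, hji, hji.ne']
  have lower : (diagLowerUpper x a b + of fun _ _ => -b : Matrix ι ι R).det =
      (x - b) ^ Fintype.card ι := by
    rw [det_of_isLowerTriangular]
    · simp [diagLowerUpper, sub_eq_add_neg]
    · intro i j (hij : i < j)
      simp [diagLowerUpper, hij.ne, not_lt_of_gt hij]
  rw [← upper, ← lower, hc, hc]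
  ring

theorem det_diagLowerUpper_zero_of_mul_eq_sub {K : Type*} [Field K] {a b : K}
    (hab : a * b = b - a) (n : ℕ) :
    (diagLowerUpper 0 a b : Matrix (Fin (n + 1)) (Fin (n + 1)) K).det =
      (-1) ^ (n + 1) * (a ^ n - b ^ n) := by
  by_cases hba : b = a
  · subst hba
    obtain rfl : b = 0 := by simpa using hab
    have hzero : (diagLowerUpper 0 0 0 : Matrix (Fin (n + 1)) (Fin (n + 1)) K) = 0 := by
      ext i j
      simp [diagLowerUpper]
    simp [hzero]
  · refine mul_left_cancel₀ (sub_ne_zero.mpr hba) ?_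
    rw [sub_mul_det_diagLowerUpper, Fintype.card_fin]
    linear_combination (-1) ^ (n + 1) * (a ^ n - b ^ n) * hab

end Matrix

theorem omegaMat_sub_transpose_inv (K : Type*) [Field K] (t : K) (n : ℕ) :
    omegaMat K t n - (omegaMat K t⁻¹ n)ᵀ = diagLowerUpper 0 (1 - t) (t⁻¹ - 1) := by
  ext j k
  rcases lt_trichotomy j k with hjk | rfl | hkj
  · simp [omegaMat, diagLowerUpper, hjk, hjk.ne, hjk.ne', not_lt_of_gt hjk]
  · simp [omegaMat, diagLowerUpper]
  · simp [omegaMat, diagLowerUpper, hkj, hkj.ne, hkj.ne', not_lt_of_gt hkj]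

/-- `det H_n = (-1)^n [(1-t)^{n-1} - (t⁻¹-1)^{n-1}]`, where
`H_n = Ω_n - ᵀΩ̄_n`. -/
theorem stmt_9 (K : Type*) [Field K] (t : K) (ht : t ≠ 0) (n : ℕ) (hn : 1 ≤ n) :
    (omegaMat K t n - (omegaMat K t⁻¹ n)ᵀ).det =
      (-1) ^ n * ((1 - t) ^ (n - 1) - (t⁻¹ - 1) ^ (n - 1)) := by
  obtain ⟨m, rfl⟩ : ∃ m, n = m + 1 := ⟨n - 1, by omega⟩
  have hab : (1 - t) * (t⁻¹ - 1) = (t⁻¹ - 1) - (1 - t) := by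
    field_simp
  rw [omegaMat_sub_transpose_inv, det_diagLowerUpper_zero_of_mul_eq_sub hab, Nat.add_sub_cancel]
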